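/- arXiv:1211.1074 — 2 statements merged into one kernel-verified Lean document; each statement's English description precedes it below -/
import Mathlib

section
/- Let E = O(a_1) ⊕ ... ⊕ O(a_n) be a direct sum of line bundles on ℙ¹ with Σ a_i = 0, equipped with n-dimensional subspaces F_j ⊂ E_{x_j} ⊕ E_{z_j} (j = 1,...,g) at pairs of distinct points, each F_j a graph of an isomorphism. Suppose the stability inequality μ(E₁) + (Σ_j dim(F_j ∩ (E₁_{x_j} ⊕ E₁_{z_j})))/rk(E₁) < g holds for every nonzero proper subbundle E₁ ⊂ E. Then −g+1 ≤ a_i ≤ g−1 for every i. -/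
/-!
Test stability on the two kinds of summand subbundles. For `E₁ = O(a_i)` the intersection term
is nonnegative, so `a_i < g`. For `E₁ = ⊕_{k ≠ i} O(a_k)`, of rank `n - 1` and degree `-a_i`,
each `F_j` meets `E₁_{x_j} ⊕ E₁_{z_j}` in dimension at least `n - 2`, so
`-a_i + g (n - 2) < g (n - 1)`, i.e. `-a_i < g`.
-/

open Finset

def SummandStable {n g : ℕ} (a : Fin n → ℤ) (f : Finset (Fin n) → Fin g → ℕ) : Prop :=
  ∀ S : Finset (Fin n), S.Nonempty → S ≠ Finset.univ →
    ((∑ i ∈ S, a i : ℤ) : ℚ) / S.card + ((∑ j, f S j : ℕ) : ℚ) / S.card < (g : ℚ)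

lemma add_lt_mul_of_div_add_div_lt {d : ℤ} {e c g : ℕ} (hc : 0 < c)
    (h : (d : ℚ) / c + (e : ℚ) / c < g) : d + e < g * c := by
  rw [← add_div, div_lt_iff₀ (by exact_mod_cast hc)] at h
  exact_mod_cast h

namespace SummandStable

variable {n g : ℕ} {a : Fin n → ℤ} {f : Finset (Fin n) → Fin g → ℕ}

lemma sum_add_sum_lt (hstab : SummandStable a f) {S : Finset (Fin n)} (hS : S.Nonempty)
    (hS' : S ≠ univ) : ∑ i ∈ S, a i + ∑ j, (f S j : ℤ) < g * S.card := by
  exact_mod_cast add_lt_mul_of_div_add_div_lt hS.card_pos (hstab S hS hS')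

lemma le_sub_one (hstab : SummandStable a f) (hn : 2 ≤ n) (i : Fin n) : a i ≤ g - 1 := by
  have : Nontrivial (Fin n) := Fin.nontrivial_iff_two_le.mpr hn
  have h := hstab.sum_add_sum_lt (singleton_nonempty i) (singleton_ne_univ i)
  have hf : 0 ≤ ∑ j, (f {i} j : ℤ) := by positivity
  rw [sum_singleton, card_singleton] at h
  omega

lemma neg_add_one_le (hstab : SummandStable a f) (hn : 2 ≤ n) (hdeg : ∑ i, a i = 0)
    (hgraph : ∀ (S : Finset (Fin n)) (j : Fin g), (2 * S.card : ℤ) - n ≤ (f S j : ℤ))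
    (i : Fin n) : -(g : ℤ) + 1 ≤ a i := by
  have hcard : (({i}ᶜ : Finset (Fin n)).card : ℤ) = n - 1 := by
    rw [card_compl, card_singleton, Fintype.card_fin]
    omega
  have hdeg' : ∑ k ∈ {i}ᶜ, a k = -a i := by
    have := sum_compl_add_sum {i} a
    rw [hdeg, sum_singleton] at this
    omega
  have hne : ({i}ᶜ : Finset (Fin n)).Nonempty := by
    rw [← card_pos]
    omega
  have hf : (g : ℤ) * (n - 2) ≤ ∑ j, (f {i}ᶜ j : ℤ) := by
    simpa using card_nsmul_le_sum univ (fun j => (f {i}ᶜ j : ℤ)) _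
      fun j _ => (by have := hgraph {i}ᶜ j; omega : (n : ℤ) - 2 ≤ f {i}ᶜ j)
  have h := hstab.sum_add_sum_lt hne ((compl_ne_univ_iff_nonempty _).mpr (singleton_nonempty i))
  rw [hdeg', hcard] at h
  nlinarith

end SummandStable

theorem splitting_type_bounds_of_gps_stability_general
    (n g : ℕ) (hg : 1 ≤ g)
    (a : Fin n → ℤ) (hdeg : ∑ i, a i = 0)
    (f : Finset (Fin n) → Fin g → ℕ)
    (hgraph : ∀ (S : Finset (Fin n)) (j : Fin g), (2 * S.card : ℤ) - n ≤ (f S j : ℤ))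
    (hstab : ∀ S : Finset (Fin n), S.Nonempty → S ≠ Finset.univ →
      ((∑ i ∈ S, a i : ℤ) : ℚ) / S.card + ((∑ j, f S j : ℕ) : ℚ) / S.card < (g : ℚ)) :
    ∀ i, -(g : ℤ) + 1 ≤ a i ∧ a i ≤ (g : ℤ) - 1 := by
  intro i
  obtain rfl | hn : n = 1 ∨ 2 ≤ n := by have := i.pos; omega
  · have hi : a i = 0 := by simpa [Subsingleton.elim i 0] using hdeg
    omega
  · have hstab : SummandStable a f := hstab
    exact ⟨hstab.neg_add_one_le hn hdeg hgraph i, hstab.le_sub_one hn i⟩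

theorem splitting_type_bounds_of_gps_stability
    (n g : ℕ) (hn : 1 ≤ n) (hg : 1 ≤ g)
    (a : Fin n → ℤ) (hdeg : ∑ i, a i = 0)
    (f : Finset (Fin n) → Fin g → ℕ)
    (hgraph : ∀ (S : Finset (Fin n)) (j : Fin g), (2 * S.card : ℤ) - n ≤ (f S j : ℤ))
    (hstab : ∀ S : Finset (Fin n), S.Nonempty → S ≠ Finset.univ →
      ((∑ i ∈ S, a i : ℤ) : ℚ) / S.card + ((∑ j, f S j : ℕ) : ℚ) / S.card < (g : ℚ)) :
    ∀ i, -(g : ℤ) + 1 ≤ a i ∧ a i ≤ (g : ℤ) - 1 :=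
  splitting_type_bounds_of_gps_stability_general n g hg a hdeg f hgraph hstab
end

section
/- The field ℂ(Tr(X), Tr(Y), Tr(X²), Tr(Y²), Tr(XY)) generated by the five trace functions on pairs of 2×2 matrices is a purely transcendental extension of ℂ of transcendence degree 5; i.e., the five functions Tr(X), Tr(Y), Tr(X²), Tr(Y²), Tr(XY) on M₂(ℂ) × M₂(ℂ) are algebraically independent over ℂ. -/
/-!
Specialize the generic matrices to matrices over `ℂ[t₀, …, t₄]` chosen so that the five traces
become `t₀, t₁, t₂, t₃` and `g(t₀, …, t₃) - t₄²`. Every variable is then algebraic over the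
subalgebra generated by these images (`t₄` being a square root of an element of it), so the five
images form a transcendence basis of a ring of transcendence degree 5. Algebraic independence of
the images lifts back along the specialization to the traces themselves.
-/

open MvPolynomial

/-- The polynomial ring in the 8 entries of two generic 2×2 matrices. -/
noncomputable abbrev GenRing := MvPolynomial (Fin 2 × Fin 2 × Fin 2) ℂ

/-- The first generic 2×2 matrix X = (x_{ij}). -/
noncomputable def genX : Matrix (Fin 2) (Fin 2) GenRing :=
  fun i j => MvPolynomial.X (0, i, j)

/-- The second generic 2×2 matrix Y = (y_{ij}). -/
noncomputable def genY : Matrix (Fin 2) (Fin 2) GenRing :=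
  fun i j => MvPolynomial.X (1, i, j)

open Algebra Set

universe u

theorem Algebra.IsAlgebraic.of_adjoin_eq_top {R A : Type*} [CommRing R] [CommRing A]
    [Algebra R A] [IsDomain A] {s t : Set A} (hs : adjoin R s = ⊤)
    (h : ∀ x ∈ s, IsAlgebraic (adjoin R t) x) : Algebra.IsAlgebraic (adjoin R t) A :=
  ⟨fun a ↦ IsAlgebraic.adjoin_of_forall_isAlgebraic (fun x hx ↦ h x hx.1)
    (isAlgebraic_algebraMap (⟨a, hs ▸ trivial⟩ : adjoin R s))⟩

theorem MvPolynomial.algebraicIndependent_of_isAlgebraic_X {R σ : Type u} [CommRing R]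
    [IsDomain R] [Finite σ] (v : σ → MvPolynomial σ R)
    (h : ∀ i, IsAlgebraic (adjoin R (range v)) (X i : MvPolynomial σ R)) :
    AlgebraicIndependent R v :=
  have := Algebra.IsAlgebraic.of_adjoin_eq_top (adjoin_range_X (R := R)) (by
    rintro _ ⟨i, rfl⟩
    exact h i)
  (Algebra.IsAlgebraic.isTranscendenceBasis_of_le_trdeg_of_finite R v (by simp)).1

/-- `Tr specX = t₀` and `Tr specX² = t₂`. `specY` is built the same way from `t₁, t₃` and then
deformed by `t₄` (`±t₄` on the diagonal, `-t₄²` off it) without changing `Tr specY` and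
`Tr specY²`; `t₄` survives in `Tr (specX * specY)` only as `-t₄²`. -/
noncomputable def specX : Matrix (Fin 2) (Fin 2) (MvPolynomial (Fin 5) ℂ) :=
  !![C 2⁻¹ * X 0, C 2⁻¹ * X 2 - C 2⁻¹ ^ 2 * X 0 ^ 2; 1, C 2⁻¹ * X 0]

noncomputable def specY : Matrix (Fin 2) (Fin 2) (MvPolynomial (Fin 5) ℂ) :=
  !![C 2⁻¹ * X 1 + X 4, C 2⁻¹ * X 3 - C 2⁻¹ ^ 2 * X 1 ^ 2 - X 4 ^ 2; 1, C 2⁻¹ * X 1 - X 4]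

noncomputable def specialization : GenRing →ₐ[ℂ] MvPolynomial (Fin 5) ℂ :=
  aeval fun p ↦ ![specX, specY] p.1 p.2.1 p.2.2

lemma genX_map_specialization : genX.map specialization = specX := by
  ext i j
  simp [genX, specialization]

lemma genY_map_specialization : genY.map specialization = specY := by
  ext i j
  simp [genY, specialization]

noncomputable def specializedTraces : Fin 5 → MvPolynomial (Fin 5) ℂ :=
  ![X 0, X 1, X 2, X 3,
    C 2⁻¹ * (X 0 * X 1 + X 2 + X 3) - C 2⁻¹ ^ 2 * (X 0 ^ 2 + X 1 ^ 2) - X 4 ^ 2]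

lemma specialization_comp_traces :
    specialization ∘ ![Matrix.trace genX, Matrix.trace genY, Matrix.trace (genX * genX),
      Matrix.trace (genY * genY), Matrix.trace (genX * genY)] =
    ![Matrix.trace specX, Matrix.trace specY, Matrix.trace (specX * specX),
      Matrix.trace (specY * specY), Matrix.trace (specX * specY)] := by
  ext i
  fin_cases i <;>
    simp [AddMonoidHom.map_trace, Matrix.map_mul, genX_map_specialization,
      genY_map_specialization]

lemma traces_specX_specY :
    ![Matrix.trace specX, Matrix.trace specY, Matrix.trace (specX * specX),
      Matrix.trace (specY * specY), Matrix.trace (specX * specY)] = specializedTraces := by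
  have half_mul_two : (C 2⁻¹ : MvPolynomial (Fin 5) ℂ) * 2 = 1 := by
    rw [← map_ofNat C 2, ← C_mul, inv_mul_cancel₀ two_ne_zero, C_1]
  simp only [specializedTraces, specX, specY, Matrix.mul_fin_two, Matrix.trace_fin_two_of,
    Matrix.vecCons_inj, and_true]
  refine ⟨?_, ?_, ?_, ?_, ?_⟩
  · linear_combination X 0 * half_mul_two
  · linear_combination X 1 * half_mul_two
  · linear_combination X 2 * half_mul_two
  · linear_combination X 3 * half_mul_two
  · linear_combination C 2⁻¹ * X 0 * X 1 * half_mul_two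

lemma isAlgebraic_X_adjoin_specializedTraces (i : Fin 5) :
    IsAlgebraic (adjoin ℂ (range specializedTraces)) (X i : MvPolynomial (Fin 5) ℂ) := by
  have of_mem {p} (hp : p ∈ adjoin ℂ (range specializedTraces)) :
      IsAlgebraic (adjoin ℂ (range specializedTraces)) p :=
    isAlgebraic_algebraMap (⟨p, hp⟩ : adjoin ℂ (range specializedTraces))
  fin_cases i
  · exact of_mem (subset_adjoin (mem_range_self 0))
  · exact of_mem (subset_adjoin (mem_range_self 1))
  · exact of_mem (subset_adjoin (mem_range_self 2))
  · exact of_mem (subset_adjoin (mem_range_self 3))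
  · -- `X 4 ^ 2` is `specializedTraces 4` subtracted from a polynomial in the first four images.
    refine IsAlgebraic.of_pow two_pos (of_mem ?_)
    rw [← aeval_range]
    exact ⟨C 2⁻¹ * (X 0 * X 1 + X 2 + X 3) - C 2⁻¹ ^ 2 * (X 0 ^ 2 + X 1 ^ 2) - X 4,
      by simp [specializedTraces]⟩

theorem traces_algebraicIndependent :
    AlgebraicIndependent ℂ
      ![Matrix.trace genX, Matrix.trace genY, Matrix.trace (genX * genX),
        Matrix.trace (genY * genY), Matrix.trace (genX * genY)] := by
  refine .of_comp specialization ?_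
  rw [specialization_comp_traces, traces_specX_specY]
  exact algebraicIndependent_of_isAlgebraic_X _ isAlgebraic_X_adjoin_specializedTraces
end
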